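/- Let a ∈ ℝ^n with a_j > 0 for all j. If C, C̃ ∈ ℝ^n satisfy F(C) = a and F(C̃) = a, then C = C̃. -/

import Mathlib

open MeasureTheory Set
open scoped Classical

/-- `f_j^{(C)}(t) = C_j - (t - x_j)^2`. -/
noncomputable def fj (n : ℕ) (x C : Fin n → ℝ) (j : Fin n) (t : ℝ) : ℝ :=
  C j - (t - x j) ^ 2

/-- `f^{(C)}(t) = max{f_1^{(C)}(t), …, f_n^{(C)}(t), 0}`. -/
noncomputable def fmax (n : ℕ) (x C : Fin n → ℝ) (t : ℝ) : ℝ :=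
  max (⨆ j : Fin n, fj n x C j t) 0

/-- `E_j^{(C)} = {t : f_j^{(C)}(t) = f^{(C)}(t)}`. -/
def Ej (n : ℕ) (x C : Fin n → ℝ) (j : Fin n) : Set ℝ :=
  {t | fj n x C j t = fmax n x C t}

/-- `F_j(C) = ∫_{E_j^{(C)}} f^{(C)}` if `E_j^{(C)} ≠ ∅`, else `0`. -/
noncomputable def Fj (n : ℕ) (x C : Fin n → ℝ) (j : Fin n) : ℝ :=
  if (Ej n x C j).Nonempty then ∫ t in Ej n x C j, fmax n x C t else 0

/-- `F(C) = (F_1(C), …, F_n(C))`. -/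
noncomputable def Fvec (n : ℕ) (x C : Fin n → ℝ) : Fin n → ℝ :=
  fun j => Fj n x C j

/-- `𝔾 = {C : F_j(C) > 0 for all j}`. -/
def Gset (n : ℕ) (x : Fin n → ℝ) : Set (Fin n → ℝ) :=
  {C | ∀ j, 0 < Fj n x C j}

/-- `γ_{ij}(C) = (C_i - C_j)/(2(x_j - x_i)) + (x_i + x_j)/2`. -/
noncomputable def gam (n : ℕ) (x C : Fin n → ℝ) (i j : Fin n) : ℝ :=
  (C i - C j) / (2 * (x j - x i)) + (x i + x j) / 2

/-!
Suppose `C ≠ C'`, say `C_i > C'_i` for some `i`, and let `j` maximise `C_k - C'_k`, with maximum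
`m > 0`. At a point where `f_j^{(C')}` realises `f^{(C')}`, raising every `C'_k` to `C_k` raises
the `j`-th parabola by `m` and every other one by at most `m`, so `f_j^{(C)}` realises `f^{(C)}`
there and `f^{(C)} = f^{(C')} + m`. Hence `E_j^{(C')} ⊆ E_j^{(C)}` and
`F_j(C) ≥ F_j(C') + m |E_j^{(C')}|`, where `|E_j^{(C')}| > 0` because `F_j(C') > 0`; this
contradicts `F_j(C) = F_j(C')`.
-/

variable {n : ℕ} {x C C' : Fin n → ℝ} {j : Fin n} {t : ℝ}

lemma measurable_fmax : Measurable (fmax n x C) :=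
  (Measurable.iSup fun j => by unfold fj; fun_prop).max measurable_const

lemma measurableSet_Ej : MeasurableSet (Ej n x C j) :=
  measurableSet_eq_fun (by unfold fj; fun_prop) measurable_fmax

lemma fmax_nonneg : 0 ≤ fmax n x C t := le_max_right _ _

lemma fj_le_fmax (k : Fin n) : fj n x C k t ≤ fmax n x C t :=
  (le_ciSup (f := fun k => fj n x C k t) (Set.finite_range _).bddAbove k).trans (le_max_left _ _)

lemma fmax_eq_fj_of_forall_le (hk : ∀ k, fj n x C k t ≤ fj n x C j t) (h0 : 0 ≤ fj n x C j t) :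
    fmax n x C t = fj n x C j t := by
  have : Nonempty (Fin n) := ⟨j⟩
  have hsup : ⨆ k, fj n x C k t = fj n x C j t :=
    le_antisymm (ciSup_le hk) (le_ciSup (f := fun k => fj n x C k t) (Set.finite_range _).bddAbove j)
  rw [fmax, hsup, max_eq_left h0]

lemma fmax_eq_fj_of_mem_Ej (ht : t ∈ Ej n x C j) : fmax n x C t = fj n x C j t := ht.symm

lemma fmax_le_of_mem_Ej (ht : t ∈ Ej n x C j) : fmax n x C t ≤ C j := by
  rw [fmax_eq_fj_of_mem_Ej ht, fj]
  nlinarith [sq_nonneg (t - x j)]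

lemma Ej_subset_Icc : Ej n x C j ⊆ Icc (x j - √(C j)) (x j + √(C j)) := by
  intro t ht
  have hsq : (t - x j) ^ 2 ≤ C j := by
    have := fmax_nonneg (x := x) (C := C) (t := t)
    rw [fmax_eq_fj_of_mem_Ej ht, fj] at this
    linarith
  have habs : |t - x j| ≤ √(C j) := Real.abs_le_sqrt hsq
  rw [abs_le] at habs
  constructor <;> linarith

lemma volume_Ej_ne_top : volume (Ej n x C j) ≠ ⊤ :=
  (measure_mono Ej_subset_Icc).trans_lt measure_Icc_lt_top |>.ne

lemma integrableOn_fmax_Ej : IntegrableOn (fmax n x C) (Ej n x C j) :=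
  Measure.integrableOn_of_bounded (M := C j) volume_Ej_ne_top measurable_fmax.aestronglyMeasurable
    ((ae_restrict_iff' measurableSet_Ej).2 <| .of_forall fun _ ht => by
      rw [Real.norm_of_nonneg fmax_nonneg]
      exact fmax_le_of_mem_Ej ht)

lemma Fj_eq_setIntegral : Fj n x C j = ∫ t in Ej n x C j, fmax n x C t := by
  rw [Fj]
  split_ifs with hne
  · rfl
  · rw [not_nonempty_iff_eq_empty.1 hne, setIntegral_empty]

lemma measureReal_Ej_pos (hpos : 0 < Fj n x C j) : 0 < volume.real (Ej n x C j) := by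
  refine lt_of_le_of_ne measureReal_nonneg fun hzero => hpos.ne' ?_
  rw [Fj_eq_setIntegral, Measure.restrict_eq_zero.2
    ((measureReal_eq_zero_iff volume_Ej_ne_top).1 hzero.symm), integral_zero_measure]

section Shift

variable (hm : 0 ≤ C j - C' j) (hj : ∀ k, C k - C' k ≤ C j - C' j)
include hm hj

lemma fmax_eq_fj_of_mem_Ej_of_forall_sub_le (ht : t ∈ Ej n x C' j) :
    fmax n x C t = fj n x C j t := by
  have hshift : ∀ k, fj n x C k t = fj n x C' k t + (C k - C' k) := fun k => by
    simp only [fj]; ring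
  have ht' : fj n x C' j t = fmax n x C' t := ht
  refine fmax_eq_fj_of_forall_le (fun k => ?_) ?_
  · linarith [hshift k, hshift j, hj k, fj_le_fmax (x := x) (C := C') (t := t) k]
  · linarith [hshift j, fmax_nonneg (x := x) (C := C') (t := t)]

lemma Ej_subset_Ej_of_forall_sub_le : Ej n x C' j ⊆ Ej n x C j := fun _ ht =>
  (fmax_eq_fj_of_mem_Ej_of_forall_sub_le hm hj ht).symm

lemma fmax_eq_add_of_mem_Ej_of_forall_sub_le (ht : t ∈ Ej n x C' j) :
    fmax n x C t = fmax n x C' t + (C j - C' j) := by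
  rw [fmax_eq_fj_of_mem_Ej_of_forall_sub_le hm hj ht, fmax_eq_fj_of_mem_Ej ht, fj, fj]
  ring

lemma Fj_add_le_of_forall_sub_le :
    Fj n x C' j + (C j - C' j) * volume.real (Ej n x C' j) ≤ Fj n x C j := by
  calc Fj n x C' j + (C j - C' j) * volume.real (Ej n x C' j)
      = ∫ t in Ej n x C' j, (fmax n x C' t + (C j - C' j)) := by
        rw [integral_add integrableOn_fmax_Ej (integrableOn_const volume_Ej_ne_top),
          setIntegral_const, smul_eq_mul, mul_comm, Fj_eq_setIntegral]
    _ = ∫ t in Ej n x C' j, fmax n x C t :=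
        setIntegral_congr_fun measurableSet_Ej fun _ ht =>
          (fmax_eq_add_of_mem_Ej_of_forall_sub_le hm hj ht).symm
    _ ≤ ∫ t in Ej n x C j, fmax n x C t :=
        setIntegral_mono_set integrableOn_fmax_Ej (.of_forall fun _ => fmax_nonneg)
          (Ej_subset_Ej_of_forall_sub_le hm hj).eventuallyLE
    _ = Fj n x C j := Fj_eq_setIntegral.symm

end Shift

lemma le_of_Fvec_eq (hpos : ∀ j, 0 < Fvec n x C' j) (h : Fvec n x C = Fvec n x C') : C ≤ C' := by
  by_contra hle
  obtain ⟨i, hi⟩ := not_forall.1 hle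
  have : Nonempty (Fin n) := ⟨i⟩
  obtain ⟨j, hj⟩ := Finite.exists_max fun k => C k - C' k
  have hm : 0 < C j - C' j := by linarith [hj i, not_le.1 hi]
  have hF : Fj n x C j = Fj n x C' j := congrFun h j
  have := Fj_add_le_of_forall_sub_le (x := x) hm.le hj
  nlinarith [measureReal_Ej_pos (hpos j)]

theorem stmt_19_general (n : ℕ) (x : Fin n → ℝ)
    (a : Fin n → ℝ) (ha : ∀ j, 0 < a j) (C C' : Fin n → ℝ)
    (h : Fvec n x C = a) (h' : Fvec n x C' = a) : C = C' :=
  le_antisymm (le_of_Fvec_eq (h' ▸ ha) (h.trans h'.symm))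
    (le_of_Fvec_eq (h ▸ ha) (h'.trans h.symm))

/-- Uniqueness: if `a` has all positive components and `F(C) = a = F(C̃)`,
then `C = C̃`. -/
theorem stmt_19 (n : ℕ) (hn : 1 ≤ n) (x : Fin n → ℝ) (hx : StrictMono x)
    (a : Fin n → ℝ) (ha : ∀ j, 0 < a j) (C C' : Fin n → ℝ)
    (h : Fvec n x C = a) (h' : Fvec n x C' = a) : C = C' :=
  stmt_19_general n x a ha C C' h h'
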